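/- The 4×4 Hermitian matrix Θ = [[1, i√3γ, 0, 2iγ³], [-i√3γ, 1+4γ², 2iγ(1+γ²), 0], [0, -2iγ(1+γ²), 1+4γ², i√3γ], [-2iγ³, 0, -i√3γ, 1]] satisfies H† Θ = Θ H, where H = [[-3iγ, √3, 0, 0], [√3, -iγ, 2, 0], [0, 2, iγ, √3], [0, 0, √3, 3iγ]]. -/
import Mathlib

open Complex Matrix

noncomputable def Theta4 (γ : ℝ) : Matrix (Fin 4) (Fin 4) ℂ :=
  !![1, I * Real.sqrt 3 * γ, 0, 2 * I * γ ^ 3;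
     -(I * Real.sqrt 3 * γ), ((1 + 4 * γ ^ 2 : ℝ) : ℂ), 2 * I * γ * (1 + (γ : ℂ) ^ 2), 0;
     0, -(2 * I * γ * (1 + (γ : ℂ) ^ 2)), ((1 + 4 * γ ^ 2 : ℝ) : ℂ), I * Real.sqrt 3 * γ;
     -(2 * I * γ ^ 3), 0, -(I * Real.sqrt 3 * γ), 1]

noncomputable def H4 (γ : ℝ) : Matrix (Fin 4) (Fin 4) ℂ :=
  !![-3 * I * γ, (Real.sqrt 3 : ℂ), 0, 0;
     (Real.sqrt 3 : ℂ), -(I * γ), 2, 0;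
     0, 2, I * γ, (Real.sqrt 3 : ℂ);
     0, 0, (Real.sqrt 3 : ℂ), 3 * I * γ]

theorem stmt9 (γ : ℝ) : (H4 γ)ᴴ * Theta4 γ = Theta4 γ * H4 γ := by
  have h3 : ((Real.sqrt 3 : ℝ) : ℂ) ^ 2 = 3 := by
    norm_cast
    rw [Real.sq_sqrt] <;> norm_num
  ext i j
  fin_cases i <;> fin_cases j <;>
    simp [Theta4, H4, Matrix.mul_apply, Fin.sum_univ_succ, Matrix.conjTranspose_apply,
      Complex.ext_iff] <;>
    ring_nf <;>
    simp [← Complex.ofReal_pow] <;> ring
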